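/- arXiv:1807.09983 — 3 statements merged into one kernel-verified Lean document; each statement's English description precedes it below -/
import Mathlib

section
/- Let G be a profinite group, P a closed normal pro-p Sylow subgroup of G such that G/P is the maximal pro-p' quotient. Then the extension 1 → P → G → G/P → 1 splits, i.e. there exists a closed subgroup H of G mapping isomorphically onto G/P. -/
/-!
Closed subgroups `H` with `HP = G` are closed under intersections of chains: the fibres of
`H → G/P` over a point form a directed family of nonempty compact sets. So by Zorn there is a
minimal one. If it met `P` in some `q ≠ 1`, pick an open normal `N` missing `q`. In the finite
group `H/(H ∩ N)` the image of `H ∩ P` is normal of `p`-power order and of index prime to `p`,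
so finite Schur–Zassenhaus gives a complement, and its preimage in `H` is a smaller closed
supplement avoiding `q`.
-/

/-- A compact (profinite) group is pro-`p` if every open subgroup has index a power of `p`. -/
def IsProPGroup (p : ℕ) (G : Type*) [Group G] [TopologicalSpace G] : Prop :=
  ∀ U : Subgroup G, IsOpen (U : Set G) → ∃ n : ℕ, U.index = p ^ n

/-- A compact (profinite) group has pro-order prime to `p` if no open subgroup has index
divisible by `p`. -/
def IsProPrimeToP (p : ℕ) (G : Type*) [Group G] [TopologicalSpace G] : Prop :=
  ∀ U : Subgroup G, IsOpen (U : Set G) → ¬ p ∣ U.index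

open Subgroup

namespace Subgroup

section

variable {G : Type*} [Group G]

theorem exists_sup_eq_top_inf_le_of_coprime (N Q : Subgroup G) [N.Normal] [Q.Normal]
    (hcop : (N.relIndex Q).Coprime (Q ⊔ N).index) :
    ∃ K : Subgroup G, N ≤ K ∧ K ⊔ Q = ⊤ ∧ K ⊓ Q ≤ N := by
  set f := QuotientGroup.mk' N
  have hf : Function.Surjective f := QuotientGroup.mk'_surjective N
  have hcard : Nat.card (Q.map f) = N.relIndex Q := by
    rw [← relIndex_ker, QuotientGroup.ker_mk']
  have hindex : (Q.map f).index = (Q ⊔ N).index := by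
    rw [index_map, QuotientGroup.ker_mk', MonoidHom.range_eq_top_of_surjective f hf, index_top,
      mul_one]
  have : (Q.map f).Normal := Normal.map inferInstance f hf
  obtain ⟨K, hK⟩ := exists_left_complement'_of_coprime (hcard ▸ hindex ▸ hcop)
  have hker : f.ker = N := QuotientGroup.ker_mk' N
  have hNK : N ≤ K.comap f := hker.ge.trans (MonoidHom.ker_le_comap f K)
  refine ⟨K.comap f, hNK, ?_, ?_⟩
  · have hmap : (K.comap f ⊔ Q).map f = ⊤ := by
      rw [map_sup, map_comap_eq_self_of_surjective hf, hK.sup_eq_top]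
    rw [← comap_map_eq_self (hker.le.trans (hNK.trans le_sup_left)), hmap, comap_top]
  · rintro x ⟨hxK, hxQ⟩
    have hx : f x ∈ K ⊓ Q.map f := ⟨hxK, mem_map_of_mem f hxQ⟩
    rw [hK.disjoint.eq_bot, mem_bot] at hx
    exact (QuotientGroup.eq_one_iff x).mp hx

theorem bijective_mk_of_inf_eq_bot_of_map_eq_top
    {H P : Subgroup G} [P.Normal] (hbot : H ⊓ P = ⊥) (htop : H.map (QuotientGroup.mk' P) = ⊤) :
    Function.Bijective (fun h : H => (h : G ⧸ P)) := by
  refine ⟨fun h₁ h₂ heq => Subtype.ext ?_, fun z => ?_⟩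
  · have hmem : (h₁ : G)⁻¹ * h₂ ∈ H ⊓ P :=
      ⟨H.mul_mem (H.inv_mem h₁.2) h₂.2, QuotientGroup.eq.mp heq⟩
    rw [hbot, mem_bot, inv_mul_eq_one] at hmem
    exact hmem
  · obtain ⟨g, hg, rfl⟩ := mem_map.mp (htop ▸ mem_top z)
    exact ⟨⟨g, hg⟩, rfl⟩

end

section

variable {G Γ : Type*} [Group G] [TopologicalSpace G] [CompactSpace G] [Group Γ]
  [TopologicalSpace Γ] [T1Space Γ] {f : G →* Γ}

theorem map_sInf_eq_top_of_isChain (hf : Continuous f) {c : Set (Subgroup G)}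
    (hc : IsChain (· ≤ ·) c) (hne : c.Nonempty) (hclosed : ∀ K ∈ c, IsClosed (K : Set G))
    (htop : ∀ K ∈ c, K.map f = ⊤) : (sInf c).map f = ⊤ := by
  refine eq_top_iff.mpr fun z _ => ?_
  have : Nonempty c := hne.to_subtype
  let fiber : c → Set G := fun K => (K : Set G) ∩ f ⁻¹' {z}
  have hfiber_closed (K : c) : IsClosed (fiber K) :=
    (hclosed K K.2).inter (isClosed_singleton.preimage hf)
  have hfiber_ne (K : c) : (fiber K).Nonempty := by
    obtain ⟨g, hg, hgz⟩ := mem_map.mp (htop K K.2 ▸ mem_top z)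
    exact ⟨g, hg, hgz⟩
  have hdir : Directed (· ⊇ ·) fiber := fun K L => by
    rcases hc.total K.2 L.2 with h | h
    · exact ⟨K, subset_rfl, Set.inter_subset_inter_left _ h⟩
    · exact ⟨L, Set.inter_subset_inter_left _ h, subset_rfl⟩
  obtain ⟨g, hg⟩ := IsCompact.nonempty_iInter_of_directed_nonempty_isCompact_isClosed fiber hdir
    hfiber_ne (fun K => (hfiber_closed K).isCompact) hfiber_closed
  rw [Set.mem_iInter] at hg
  exact mem_map.mpr ⟨g, mem_sInf.mpr fun K hK => (hg ⟨K, hK⟩).1, (hg ⟨hne.some, hne.some_mem⟩).2⟩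

theorem exists_minimal_isClosed_map_eq_top (hf : Continuous f)
    (hsurj : Function.Surjective f) :
    ∃ H : Subgroup G, Minimal (fun K : Subgroup G => IsClosed (K : Set G) ∧ K.map f = ⊤) H := by
  let S : Set (Subgroup G)ᵒᵈ :=
    {K | IsClosed ((OrderDual.ofDual K : Subgroup G) : Set G) ∧ (OrderDual.ofDual K).map f = ⊤}
  have hchain (c : Set (Subgroup G)ᵒᵈ) (hcS : c ⊆ S) (hc : IsChain (· ≤ ·) c) (y) (hy : y ∈ c) :
      ∃ lb ∈ S, ∀ K ∈ c, K ≤ lb := by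
    refine ⟨OrderDual.toDual (sInf (OrderDual.toDual ⁻¹' c)), ⟨?_, ?_⟩,
      fun K hK => sInf_le (α := Subgroup G) hK⟩
    · rw [OrderDual.ofDual_toDual, coe_sInf]
      exact isClosed_biInter fun K hK => (hcS hK).1
    · exact map_sInf_eq_top_of_isChain hf hc.symm ⟨y, hy⟩ (fun K hK => (hcS hK).1)
        fun K hK => (hcS hK).2
  have htop : OrderDual.toDual ⊤ ∈ S := ⟨isClosed_univ, by
    rw [OrderDual.ofDual_toDual, ← MonoidHom.range_eq_map,
      MonoidHom.range_eq_top_of_surjective f hsurj]⟩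
  obtain ⟨H, -, hH⟩ := zorn_le_nonempty₀ S hchain _ htop
  exact ⟨OrderDual.ofDual H, hH.of_dual⟩

end

end Subgroup

theorem IsProPGroup.exists_relIndex_eq_pow {p : ℕ} (hp : p.Prime) {G : Type*} [Group G]
    [TopologicalSpace G] {P : Subgroup G} (hP : IsProPGroup p P) {N : Subgroup G} [N.Normal]
    (hN : IsOpen (N : Set G)) {S : Subgroup G} (hSP : S ≤ P) : ∃ k, N.relIndex S = p ^ k := by
  obtain ⟨n, hn⟩ := hP (N.subgroupOf P) (hN.preimage continuous_subtype_val)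
  have hdvd : N.relIndex S ∣ p ^ n := by
    rw [← hn, ← relIndex, ← QuotientGroup.ker_mk' N, relIndex_ker, relIndex_ker]
    exact card_dvd_of_le (map_mono hSP)
  obtain ⟨k, -, hk⟩ := (Nat.dvd_prime_pow hp).mp hdvd
  exact ⟨k, hk⟩

theorem IsProPrimeToP.not_dvd_index_of_ker_le {p : ℕ} {H Γ : Type*} [Group H] [TopologicalSpace H]
    [IsTopologicalGroup H] [CompactSpace H] [Group Γ] [TopologicalSpace Γ] [IsTopologicalGroup Γ]
    [T2Space Γ] (hΓ : IsProPrimeToP p Γ) {f : H →* Γ} (hf : Continuous f)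
    (hsurj : Function.Surjective f) {U : Subgroup H} (hU : IsOpen (U : Set H)) (hker : f.ker ≤ U) :
    ¬ p ∣ U.index := by
  have hindex : (U.map f).index = U.index := by
    rw [← index_comap_of_surjective (U.map f) hsurj, comap_map_eq_self hker]
  have : Finite (H ⧸ U) := U.quotient_finite_of_isOpen hU
  have : (U.map f).FiniteIndex := ⟨hindex ▸ index_ne_zero_of_finite⟩
  have hclosed : IsClosed (U.map f : Set Γ) :=
    ((U.isClosed_of_isOpen hU).isCompact.image hf).isClosed
  exact hindex ▸ hΓ _ ((U.map f).isOpen_of_isClosed_of_finiteIndex hclosed)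

section Profinite

variable {p : ℕ} {G : Type*} [Group G] [TopologicalSpace G] [IsTopologicalGroup G]
  [CompactSpace G] [TotallyDisconnectedSpace G]
  {P : Subgroup G} [P.Normal] [IsClosed (P : Set G)]

theorem exists_le_isClosed_map_eq_top_notMem (hp : p.Prime) (hPpro : IsProPGroup p P)
    (hquot : IsProPrimeToP p (G ⧸ P)) {H : Subgroup G} (hHc : IsClosed (H : Set G))
    (hH : H.map (QuotientGroup.mk' P) = ⊤) {q : G} (hqH : q ∈ H) (hqP : q ∈ P) (hq : q ≠ 1) :
    ∃ K ≤ H, IsClosed (K : Set G) ∧ K.map (QuotientGroup.mk' P) = ⊤ ∧ q ∉ K := by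
  obtain ⟨N, hNq⟩ := ProfiniteGrp.exist_openNormalSubgroup_sub_open_nhds_of_one
    (isOpen_compl_singleton (x := q)) (Ne.symm hq)
  have : CompactSpace H := isCompact_iff_compactSpace.mp hHc.isCompact
  set φ := (QuotientGroup.mk' P).comp H.subtype
  have hφ : Continuous φ := continuous_quot_mk.comp continuous_subtype_val
  have hφrange : φ.range = ⊤ := by rw [MonoidHom.range_comp, range_subtype, hH]
  have hφker : φ.ker = P.subgroupOf H := by
    ext x
    simp [φ, mem_subgroupOf]
  set N' := N.toSubgroup.subgroupOf H
  have hN' : IsOpen (N' : Set H) := N.isOpen.preimage continuous_subtype_val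
  have hcop : (N'.relIndex (P.subgroupOf H)).Coprime (P.subgroupOf H ⊔ N').index := by
    obtain ⟨k, hk⟩ := hPpro.exists_relIndex_eq_pow hp N.isOpen (inf_le_left : P ⊓ H ≤ P)
    have hp_power : N'.relIndex (P.subgroupOf H) = p ^ k := by
      rw [← inf_subgroupOf_right, relIndex_subgroupOf inf_le_right, hk]
    have hindex : ¬ p ∣ (P.subgroupOf H ⊔ N').index :=
      hquot.not_dvd_index_of_ker_le hφ (MonoidHom.range_eq_top.mp hφrange)
        (isOpen_mono le_sup_right hN') (hφker.le.trans le_sup_left)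
    exact hp_power ▸ Nat.Coprime.pow_left k (hp.coprime_iff_not_dvd.mpr hindex)
  obtain ⟨K, hN'K, hKsup, hKinf⟩ := exists_sup_eq_top_inf_le_of_coprime N' (P.subgroupOf H) hcop
  refine ⟨K.map H.subtype, map_subtype_le K, ?_, ?_, ?_⟩
  · rw [coe_map]
    exact ((K.isClosed_of_isOpen (isOpen_mono hN'K hN')).isCompact.image
      continuous_subtype_val).isClosed
  · rw [map_map, ← hφrange, MonoidHom.range_eq_map, map_eq_map_iff, hφker, hKsup, top_sup_eq]
  · rintro ⟨x, hxK, rfl⟩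
    exact hNq (mem_subgroupOf.mp (hKinf ⟨hxK, mem_subgroupOf.mpr hqP⟩)) rfl

end Profinite

theorem profinite_schur_zassenhaus_general
    (p : ℕ) (hp : p.Prime)
    (G : Type*) [Group G] [TopologicalSpace G] [IsTopologicalGroup G]
    [CompactSpace G] [TotallyDisconnectedSpace G]
    (P : Subgroup G) [P.Normal] (hPc : IsClosed (P : Set G))
    (hPpro : IsProPGroup p P)
    (hquot : IsProPrimeToP p (G ⧸ P)) :
    ∃ H : Subgroup G, IsClosed (H : Set G) ∧
      Function.Bijective (fun h : H => QuotientGroup.mk (s := P) (h : G)) := by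
  have : IsClosed (P : Set G) := hPc
  obtain ⟨H, hH⟩ := exists_minimal_isClosed_map_eq_top continuous_quot_mk
    (QuotientGroup.mk'_surjective P)
  have hbot : H ⊓ P = ⊥ := by
    refine (eq_bot_iff_forall _).mpr fun q hq => by_contra fun hq1 => ?_
    obtain ⟨K, hKH, hKc, hKtop, hqK⟩ :=
      exists_le_isClosed_map_eq_top_notMem hp hPpro hquot hH.prop.1 hH.prop.2 hq.1 hq.2 hq1
    exact hqK (hH.le_of_le ⟨hKc, hKtop⟩ hKH hq.1)
  exact ⟨H, hH.prop.1, bijective_mk_of_inf_eq_bot_of_map_eq_top hbot hH.prop.2⟩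

/-- Profinite Schur–Zassenhaus: if `G` is a profinite group, `P` a closed normal pro-`p`
subgroup such that `G/P` has pro-order prime to `p`, then the extension
`1 → P → G → G/P → 1` splits: there is a closed subgroup `H` of `G` mapping
isomorphically (bijectively, via the quotient map) onto `G/P`. -/
theorem profinite_schur_zassenhaus
    (p : ℕ) (hp : p.Prime)
    (G : Type*) [Group G] [TopologicalSpace G] [IsTopologicalGroup G]
    [CompactSpace G] [T2Space G] [TotallyDisconnectedSpace G]
    (P : Subgroup G) [P.Normal] (hPc : IsClosed (P : Set G))
    (hPpro : IsProPGroup p P)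
    (hquot : IsProPrimeToP p (G ⧸ P)) :
    ∃ H : Subgroup G, IsClosed (H : Set G) ∧
      Function.Bijective (fun h : H => QuotientGroup.mk (s := P) (h : G)) :=
  profinite_schur_zassenhaus_general p hp G P hPc hPpro hquot
end

section
/- Let G be a group, N a normal subgroup of finite index r, and χ : N → K* a one-dimensional character over a field K. Then the determinant of the induced representation Ind_N^G χ equals ε · (χ ∘ V), where ε is the sign character of the permutation action of G on G/N and V : G → N^{ab} is the transfer map. -/
/-! In the basis of `G ⧸ N` given by the representatives `q.out`, `g` acts by the monomial matrix
with permutation `q ↦ g • q` and entries `χ (outFactor N g q)`, where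
`g * q.out = (g • q).out * outFactor N g q`. Its determinant is the sign of the permutation times
the product of the entries, and that product is the transfer of `χ` computed with the transversal
`Quotient.out`. -/

open scoped Classical

/-- The monomial matrix of the induced representation `Ind_N^G χ` of a one-dimensional
character `χ : N → Kˣ`, in the model with basis indexed by `G/N` (using the transversal
given by `Quotient.out`). -/
noncomputable def inducedMatrix {G : Type*} [Group G] (N : Subgroup G)
    {K : Type*} [Field K] (χ : N →* Kˣ) (g : G) :
    Matrix (G ⧸ N) (G ⧸ N) K := fun x y =>
  if h : g • y = x then
    (χ ⟨(Quotient.out x)⁻¹ * g * Quotient.out y, by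
      have h1 : (QuotientGroup.mk (Quotient.out x) : G ⧸ N) =
          QuotientGroup.mk (g * Quotient.out y) := by
        rw [QuotientGroup.out_eq', ← h]
        conv_lhs => rw [← QuotientGroup.out_eq' y]
        rfl
      simpa [mul_assoc] using QuotientGroup.eq.mp h1⟩ : K)
  else 0

namespace Matrix

variable {n R : Type*} [Fintype n] [DecidableEq n] [CommRing R]

theorem det_monomial (σ : Equiv.Perm n) (d : n → R) :
    (of fun i j => if σ j = i then d j else 0).det = Equiv.Perm.sign σ * ∏ j, d j := by
  have hfactor : (of fun i j => if σ j = i then d j else 0) = σ⁻¹.permMatrix R * diagonal d := by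
    ext i j
    by_cases h : σ j = i
    · subst h
      simp
    · simp [h, mul_diagonal, Equiv.symm_apply_eq, Ne.symm h]
  rw [hfactor, det_mul, det_permutation, det_diagonal, Equiv.Perm.sign_inv]

end Matrix

namespace QuotientGroup

variable {G : Type*} [Group G] (N : Subgroup G)

theorem out_smul_inv_mul_mul_out_mem (g : G) (q : G ⧸ N) : (g • q).out⁻¹ * g * q.out ∈ N := by
  rw [mul_assoc, ← QuotientGroup.eq, QuotientGroup.out_eq']
  exact (MulAction.Quotient.coe_smul_out N g q).symm

noncomputable def outFactor (g : G) (q : G ⧸ N) : N :=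
  ⟨(g • q).out⁻¹ * g * q.out, out_smul_inv_mul_mul_out_mem N g q⟩

theorem transfer_eq_prod_outFactor [N.FiniteIndex] [Fintype (G ⧸ N)] {A : Type*} [CommGroup A]
    (ϕ : N →* A) (g : G) : MonoidHom.transfer ϕ g = ∏ q, ϕ (outFactor N g q) := by
  let T : N.LeftTransversal := default
  have hT : ∀ q : G ⧸ N, (T.2.leftQuotientEquiv q : G) = q.out :=
    Subgroup.IsComplement.leftQuotientEquiv_apply QuotientGroup.out_eq'
  rw [MonoidHom.transfer_def ϕ T g]
  -- `diff` multiplies over `N.fintypeQuotientOfFiniteIndex`, not over the given `Fintype`.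
  exact @Fintype.prod_equiv _ _ _ N.fintypeQuotientOfFiniteIndex _ _ (MulAction.toPerm g).symm _ _
    fun q => congrArg ϕ <| Subtype.ext <| by
      simp [outFactor, Subgroup.smul_apply_eq_smul_apply_inv_smul, hT, mul_assoc]

end QuotientGroup

theorem inducedMatrix_eq_monomial {G : Type*} [Group G] (N : Subgroup G)
    [DecidableEq (G ⧸ N)] {K : Type*} [Field K] (χ : N →* Kˣ) (g : G) :
    inducedMatrix N χ g = Matrix.of fun x y =>
      if MulAction.toPermHom G (G ⧸ N) g y = x then ((χ (QuotientGroup.outFactor N g y) : Kˣ) : K)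
      else 0 := by
  ext x y
  by_cases h : g • y = x
  · subst h
    simp [inducedMatrix, QuotientGroup.outFactor]
  · simp [inducedMatrix, h]

theorem det_induced_eq_sign_mul_transfer_general
    {G : Type*} [Group G] (N : Subgroup G) [N.FiniteIndex]
    [Fintype (G ⧸ N)] [DecidableEq (G ⧸ N)]
    {K : Type*} [Field K] (χ : N →* Kˣ) (g : G) :
    (inducedMatrix N χ g).det =
      ((Equiv.Perm.sign (MulAction.toPermHom G (G ⧸ N) g) : ℤ) : K) *
        ((MonoidHom.transfer χ g : Kˣ) : K) := by
  rw [inducedMatrix_eq_monomial, Matrix.det_monomial,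
    QuotientGroup.transfer_eq_prod_outFactor, Units.coe_prod]

/-- Determinant of an induced representation: for `N ⊴ G` of finite index and a character
`χ : N → Kˣ`, the determinant of `Ind_N^G χ` at `g` is the sign `ε(g)` of the permutation
of `G/N` induced by `g`, times `χ` composed with the transfer map `V : G → N^{ab}`. -/
theorem det_induced_eq_sign_mul_transfer
    {G : Type*} [Group G] (N : Subgroup G) [N.Normal] [N.FiniteIndex]
    [Fintype (G ⧸ N)] [DecidableEq (G ⧸ N)]
    {K : Type*} [Field K] [CharZero K] (χ : N →* Kˣ) (g : G) :
    (inducedMatrix N χ g).det =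
      ((Equiv.Perm.sign (MulAction.toPermHom G (G ⧸ N) g) : ℤ) : K) *
        ((MonoidHom.transfer χ g : Kˣ) : K) :=
  det_induced_eq_sign_mul_transfer_general N χ g
end

section
/- Let G be a group, H a subgroup of finite index, and χ : H → K* a one-dimensional character with K a field. For any finite-dimensional representation W of G, Ind_H^G(χ ⊗ Res_H^G W) ≅ (Ind_H^G χ) ⊗ W. -/
/-!
Both induced representations are spaces of functions on `G` determined by their values on a
transversal of `G ⧸ H`. Composing with `ρW` untwists `Ind_H^G (χ ⊗ Res_H^G W)` into the
`W`-valued analogue of `Ind_H^G χ`; restricting to the transversal identifies that with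
`G ⧸ H → W ≃ (G ⧸ H → K) ⊗ W`, and hence with `Ind_H^G χ ⊗ W`. The inverse of this
isomorphism sends `φ ⊗ w` to `g ↦ φ g • ρW g⁻¹ w`, which visibly commutes with left translation.
-/

open scoped TensorProduct

section Induced

variable {G : Type*} [Group G] (H : Subgroup G)
variable {K : Type*} [Field K] (χ : H →* Kˣ)
variable {W : Type*} [AddCommGroup W] [Module K W]

/-- Model for the induced representation `Ind_H^G χ` of a one-dimensional character
`χ : H → Kˣ`: functions `f : G → K` with `f (g h) = χ(h)⁻¹ • f g`. -/
def indCharSpace : Submodule K (G → K) where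
  carrier := {f | ∀ (g : G) (h : H), f (g * h) = ((χ h)⁻¹ : Kˣ) • f g}
  add_mem' := by
    intro a b ha hb g h
    simp [ha g h, hb g h, smul_add]
  zero_mem' := by intro g h; simp
  smul_mem' := by
    intro c a ha g h
    simp only [Pi.smul_apply, ha g h]
    rw [smul_comm]

/-- Model for `Ind_H^G (χ ⊗ Res_H^G W)` for a representation `ρW` of `G` on `W`:
functions `f : G → W` with `f (g h) = χ(h)⁻¹ • ρW(h)⁻¹ (f g)`. -/
def indTwistSpace (ρW : Representation K G W) : Submodule K (G → W) where
  carrier := {f | ∀ (g : G) (h : H), f (g * h) = ((χ h)⁻¹ : Kˣ) • ρW ((h : G)⁻¹) (f g)}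
  add_mem' := by
    intro a b ha hb g h
    simp [ha g h, hb g h, smul_add]
  zero_mem' := by intro g h; simp
  smul_mem' := by
    intro c a ha g h
    simp only [Pi.smul_apply, ha g h, map_smul]
    rw [smul_comm]

/-- The `G`-action (by left translation) on the model of `Ind_H^G χ`. -/
def indCharAction (g₀ : G) : indCharSpace H χ →ₗ[K] indCharSpace H χ where
  toFun f := ⟨fun x => (f : G → K) (g₀⁻¹ * x), by
    intro g h
    show (f : G → K) (g₀⁻¹ * (g * h)) = _
    rw [← mul_assoc]
    exact f.2 (g₀⁻¹ * g) h⟩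
  map_add' := by intro a b; ext x; rfl
  map_smul' := by intro c a; ext x; rfl

/-- The `G`-action (by left translation) on the model of `Ind_H^G (χ ⊗ Res_H^G W)`. -/
def indTwistAction (ρW : Representation K G W) (g₀ : G) :
    indTwistSpace H χ ρW →ₗ[K] indTwistSpace H χ ρW where
  toFun f := ⟨fun x => (f : G → W) (g₀⁻¹ * x), by
    intro g h
    show (f : G → W) (g₀⁻¹ * (g * h)) = _
    rw [← mul_assoc]
    exact f.2 (g₀⁻¹ * g) h⟩
  map_add' := by intro a b; ext x; rfl
  map_smul' := by intro c a; ext x; rfl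

end Induced

section Transversal

variable {G : Type*} [Group G] (H : Subgroup G)

noncomputable def cosetOffset (g : G) : H :=
  ⟨(g : G ⧸ H).out⁻¹ * g, QuotientGroup.eq.mp (QuotientGroup.out_eq' _)⟩

lemma out_mul_cosetOffset (g : G) : (g : G ⧸ H).out * cosetOffset H g = g := by
  simp [cosetOffset]

lemma cosetOffset_mul (g : G) (h : H) : cosetOffset H (g * h) = cosetOffset H g * h := by
  ext
  simp [cosetOffset, QuotientGroup.mk_mul_of_mem g h.2, mul_assoc]

lemma cosetOffset_out (q : G ⧸ H) : cosetOffset H q.out = 1 := by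
  ext
  simp [cosetOffset]

end Transversal

section IndChar

variable {G : Type*} [Group G] (H : Subgroup G)
variable {K : Type*} [Field K] (χ : H →* Kˣ)
variable (V : Type*) [AddCommGroup V] [Module K V]

/-- `Ind_H^G χ ⊗ V` for `V` with trivial `G`-action; `indCharSpace` is the case `V = K`. -/
def indCharValued : Submodule K (G → V) where
  carrier := {f | ∀ (g : G) (h : H), f (g * h) = ((χ h)⁻¹ : Kˣ) • f g}
  add_mem' ha hb g h := by simp [ha g h, hb g h, smul_add]
  zero_mem' g h := by simp
  smul_mem' c f hf g h := by simp only [Pi.smul_apply, hf g h, smul_comm c]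

variable {H χ V}

lemma indCharValued_apply_eq {f : G → V} (hf : f ∈ indCharValued H χ V) (g : G) :
    f g = ((χ (cosetOffset H g))⁻¹ : Kˣ) • f (g : G ⧸ H).out := by
  conv_lhs => rw [← out_mul_cosetOffset H g]
  exact hf _ _

variable (H χ V)

noncomputable def restrictToTransversal : indCharValued H χ V ≃ₗ[K] (G ⧸ H → V) where
  toFun f q := (f : G → V) q.out
  map_add' _ _ := rfl
  map_smul' _ _ := rfl
  invFun c := ⟨fun g => ((χ (cosetOffset H g))⁻¹ : Kˣ) • c g, fun g h => by
    simp only [QuotientGroup.mk_mul_of_mem g h.2, cosetOffset_mul, map_mul, mul_inv, mul_smul]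
    exact smul_comm _ _ _⟩
  left_inv f := Subtype.ext <| funext fun g => (indCharValued_apply_eq f.2 g).symm
  right_inv c := funext fun q => by simp [cosetOffset_out]

@[simp]
lemma restrictToTransversal_apply (f : indCharValued H χ V) (q : G ⧸ H) :
    restrictToTransversal H χ V f q = (f : G → V) q.out := rfl

end IndChar

section Untwist

variable {G : Type*} [Group G] (H : Subgroup G)
variable {K : Type*} [Field K] (χ : H →* Kˣ)
variable {W : Type*} [AddCommGroup W] [Module K W] (ρW : Representation K G W)

noncomputable def untwist : indTwistSpace H χ ρW ≃ₗ[K] indCharValued H χ W where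
  toFun f := ⟨fun g => ρW g ((f : G → W) g), fun g h => by
    dsimp only
    rw [f.2 g h, Units.smul_def, map_smul, ← Module.End.mul_apply, ← map_mul,
      mul_inv_cancel_right, Units.smul_def]⟩
  map_add' _ _ := Subtype.ext <| funext fun _ => map_add _ _ _
  map_smul' _ _ := Subtype.ext <| funext fun _ => map_smul _ _ _
  invFun F := ⟨fun g => ρW g⁻¹ ((F : G → W) g), fun g h => by
    dsimp only
    rw [F.2 g h, Units.smul_def, Units.smul_def, map_smul, mul_inv_rev, map_mul,
      Module.End.mul_apply]⟩
  left_inv f := Subtype.ext <| funext fun g => by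
    simp [← Module.End.mul_apply, ← map_mul]
  right_inv F := Subtype.ext <| funext fun g => by
    simp [← Module.End.mul_apply, ← map_mul]

end Untwist

section ProjectionFormula

variable {G : Type*} [Group G] (H : Subgroup G)
variable {K : Type*} [Field K] (χ : H →* Kˣ)
variable {V : Type*} [AddCommGroup V] [Module K V]

lemma indCharSpace_eq_indCharValued : indCharSpace H χ = indCharValued H χ K := rfl

variable {H χ}

lemma smul_const_mem_indCharValued {φ : G → K} (hφ : φ ∈ indCharValued H χ K) (v : V) :
    (fun g => φ g • v) ∈ indCharValued H χ V := fun g h => by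
  simp only [hφ g h, Units.smul_def, smul_eq_mul, mul_smul]

lemma restrictToTransversal_symm_smul_const {φ : G → K} (hφ : φ ∈ indCharValued H χ K) (v : V) :
    (restrictToTransversal H χ V).symm (fun q => φ q.out • v) =
      ⟨fun g => φ g • v, smul_const_mem_indCharValued hφ v⟩ :=
  (LinearEquiv.symm_apply_eq _).mpr rfl

variable (H χ)
variable {W : Type*} [AddCommGroup W] [Module K W] (ρW : Representation K G W)
variable [Fintype (G ⧸ H)] [DecidableEq (G ⧸ H)]

noncomputable def projectionEquiv : indTwistSpace H χ ρW ≃ₗ[K] indCharSpace H χ ⊗[K] W :=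
  untwist H χ ρW ≪≫ₗ restrictToTransversal H χ W ≪≫ₗ
    (TensorProduct.comm K _ W ≪≫ₗ TensorProduct.piScalarRight K K W (G ⧸ H)).symm ≪≫ₗ
    TensorProduct.congr (LinearEquiv.ofEq _ _ (indCharSpace_eq_indCharValued H χ) ≪≫ₗ
      restrictToTransversal H χ K).symm (LinearEquiv.refl K W)

lemma projectionEquiv_symm_tmul_apply (φ : indCharSpace H χ) (w : W) (g : G) :
    ((projectionEquiv H χ ρW).symm (φ ⊗ₜ w) : G → W) g = (φ : G → K) g • ρW g⁻¹ w := by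
  simp [projectionEquiv, restrictToTransversal_symm_smul_const φ.2, untwist]

lemma projectionEquiv_symm_map (g₀ : G) (x : indCharSpace H χ ⊗[K] W) :
    (projectionEquiv H χ ρW).symm (TensorProduct.map (indCharAction H χ g₀) (ρW g₀) x) =
      indTwistAction H χ ρW g₀ ((projectionEquiv H χ ρW).symm x) := by
  suffices (projectionEquiv H χ ρW).symm.toLinearMap ∘ₗ
      TensorProduct.map (indCharAction H χ g₀) (ρW g₀) =
      indTwistAction H χ ρW g₀ ∘ₗ (projectionEquiv H χ ρW).symm.toLinearMap from
    LinearMap.congr_fun this x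
  refine TensorProduct.ext' fun φ w => Subtype.ext <| funext fun g => ?_
  change ((projectionEquiv H χ ρW).symm (indCharAction H χ g₀ φ ⊗ₜ ρW g₀ w) : G → W) g =
    ((projectionEquiv H χ ρW).symm (φ ⊗ₜ w) : G → W) (g₀⁻¹ * g)
  rw [projectionEquiv_symm_tmul_apply, projectionEquiv_symm_tmul_apply, mul_inv_rev, inv_inv,
    map_mul, Module.End.mul_apply]
  rfl

end ProjectionFormula

theorem projection_formula_induced_general
    {G : Type*} [Group G] (H : Subgroup G) [H.FiniteIndex]
    {K : Type*} [Field K] (χ : H →* Kˣ)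
    {W : Type*} [AddCommGroup W] [Module K W]
    (ρW : Representation K G W) :
    ∃ e : indTwistSpace H χ ρW ≃ₗ[K] (indCharSpace H χ ⊗[K] W),
      ∀ (g : G) (f : indTwistSpace H χ ρW),
        e (indTwistAction H χ ρW g f) =
          TensorProduct.map (indCharAction H χ g) (ρW g) (e f) := by
  classical
  have : Fintype (G ⧸ H) := Fintype.ofFinite _
  refine ⟨projectionEquiv H χ ρW, fun g f => ?_⟩
  rw [eq_comm, ← LinearEquiv.symm_apply_eq, projectionEquiv_symm_map,
    LinearEquiv.symm_apply_apply]

/-- Projection formula for induced representations: for `H ≤ G` of finite index, a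
character `χ : H → Kˣ` and a finite-dimensional `K`-linear representation `ρW` of `G` on
`W`, there is an isomorphism of representations
`Ind_H^G (χ ⊗ Res_H^G W) ≅ (Ind_H^G χ) ⊗ W`. -/
theorem projection_formula_induced
    {G : Type*} [Group G] (H : Subgroup G) [H.FiniteIndex]
    {K : Type*} [Field K] (χ : H →* Kˣ)
    {W : Type*} [AddCommGroup W] [Module K W] [FiniteDimensional K W]
    (ρW : Representation K G W) :
    ∃ e : indTwistSpace H χ ρW ≃ₗ[K] (indCharSpace H χ ⊗[K] W),
      ∀ (g : G) (f : indTwistSpace H χ ρW),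
        e (indTwistAction H χ ρW g f) =
          TensorProduct.map (indCharAction H χ g) (ρW g) (e f) :=
  projection_formula_induced_general H χ ρW
end
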